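/- For γ: ℝ → ℝ² given by γ(t) = (t³, t⁶) and constant radius 1, the two maps f±(t) = (t³ ∓ 2t³/√(4t⁶+1), t⁶ ± 1/√(4t⁶+1)) are envelopes of the circle family C_{(γ,λ)}, and every envelope equals f₊ or f₋. In particular, the discriminant set D = {(x,y) : ∃t, F(x,y,t) = ∂F/∂t(x,y,t) = 0} with F(x,y,t) = (x-t³)² + (y-t⁶)² - 1 strictly contains the union of the images of all envelopes, since D also contains the unit circle. -/

import Mathlib

noncomputable section

/-- The Euclidean plane. -/
abbrev Plane := EuclideanSpace ℝ (Fin 2)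

/-- The standard scalar (dot) product on the plane. -/
def dotp (x y : Plane) : ℝ := inner ℝ x y

/-- The vector with coordinates `a`, `b`. -/
def vec2 (a b : ℝ) : Plane := (WithLp.equiv 2 (Fin 2 → ℝ)).symm ![a, b]

/-- Anti-clockwise rotation by π/2. -/
def rotJ (v : Plane) : Plane := vec2 (-(v 1)) (v 0)

/-- `f` is an envelope of the circle family with center curve `γ` and radius
function `r`, on the parameter set `I`. -/
def IsEnvelope (I : Set ℝ) (γ : ℝ → Plane) (r : ℝ → ℝ) (f : ℝ → Plane) : Prop :=
  ContDiffOn ℝ (⊤ : ℕ∞) f I ∧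
    ∀ t ∈ I, ‖f t - γ t‖ = r t ∧ dotp (deriv f t) (f t - γ t) = 0


lemma vec2_apply0 (a b : ℝ) : vec2 a b 0 = a := rfl
lemma vec2_apply1 (a b : ℝ) : vec2 a b 1 = b := rfl
lemma vec2_sub (a b c d : ℝ) : vec2 a b - vec2 c d = vec2 (a - c) (b - d) := by
  ext i; fin_cases i <;> rfl
lemma vec2_smul (a b : ℝ) : a • vec2 1 0 + b • vec2 0 1 = vec2 a b := by
  ext i; fin_cases i <;> simp [vec2]
lemma dotp_eq (x y : Plane) : dotp x y = x 0 * y 0 + x 1 * y 1 := by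
  simp [dotp, PiLp.inner_apply, Fin.sum_univ_two, RCLike.inner_apply, conj_trivial]
  ring
lemma norm_sq_eq (x : Plane) : ‖x‖ ^ 2 = x 0 ^ 2 + x 1 ^ 2 := by
  rw [EuclideanSpace.norm_eq, Real.sq_sqrt (by positivity)]
  simp [Fin.sum_univ_two, sq_abs]
lemma norm_eq_one {x : Plane} (h : x 0 ^ 2 + x 1 ^ 2 = 1) : ‖x‖ = 1 := by
  have h1 : ‖x‖ ^ 2 = 1 := by rw [norm_sq_eq]; exact h
  have h2 : (‖x‖ - 1) * (‖x‖ + 1) = 0 := by nlinarith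
  rcases mul_eq_zero.mp h2 with h | h
  · linarith
  · have := norm_nonneg x; linarith
lemma hasDerivAt_vec2 {a b : ℝ → ℝ} {a' b' : ℝ} {t : ℝ}
    (ha : HasDerivAt a a' t) (hb : HasDerivAt b b' t) :
    HasDerivAt (fun s => vec2 (a s) (b s)) (vec2 a' b') t := by
  have h : (fun s => vec2 (a s) (b s)) = fun s => a s • vec2 1 0 + b s • vec2 0 1 := by
    funext s; rw [vec2_smul]
  rw [h, ← vec2_smul a' b']
  exact ((ha.smul_const _).add (hb.smul_const _))

lemma inner_eq (x y : Plane) : (inner ℝ x y : ℝ) = x 0 * y 0 + x 1 * y 1 := dotp_eq x y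

lemma plane_ext {x y : Plane} (h0 : x 0 = y 0) (h1 : x 1 = y 1) : x = y := by
  ext i; fin_cases i
  · exact h0
  · exact h1

lemma q_pos (t : ℝ) : 0 < Real.sqrt (4 * t ^ 6 + 1) := Real.sqrt_pos.mpr (by positivity)
lemma q_sq (t : ℝ) : Real.sqrt (4 * t ^ 6 + 1) ^ 2 = 4 * t ^ 6 + 1 :=
  Real.sq_sqrt (by positivity)

lemma hasDerivAt_q (t : ℝ) :
    HasDerivAt (fun s => Real.sqrt (4 * s ^ 6 + 1))
      (12 * t ^ 5 / Real.sqrt (4 * t ^ 6 + 1)) t := by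
  have h : HasDerivAt (fun s : ℝ => 4 * s ^ 6 + 1) (4 * (6 * t ^ 5)) t := by
    simpa using ((hasDerivAt_pow 6 t).const_mul 4).add_const 1
  have := h.sqrt (by positivity)
  convert this using 1
  field_simp
  ring

lemma hasDerivAt_X (ε t : ℝ) :
    HasDerivAt (fun s => s ^ 3 - ε * (2 * s ^ 3) / Real.sqrt (4 * s ^ 6 + 1))
      (3 * t ^ 2 - ((ε * (2 * (3 * t ^ 2))) * Real.sqrt (4 * t ^ 6 + 1)
        - ε * (2 * t ^ 3) * (12 * t ^ 5 / Real.sqrt (4 * t ^ 6 + 1)))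
        / Real.sqrt (4 * t ^ 6 + 1) ^ 2) t := by
  have h1 : HasDerivAt (fun s : ℝ => ε * (2 * s ^ 3)) (ε * (2 * (3 * t ^ 2))) t := by
    simpa [mul_assoc] using ((hasDerivAt_pow 3 t).const_mul (ε * 2))
  have h2 := (h1.div (hasDerivAt_q t) (q_pos t).ne')
  simpa [pow_succ, Pi.sub_def, Pi.div_def] using (hasDerivAt_pow 3 t).sub h2

lemma hasDerivAt_Y (ε t : ℝ) :
    HasDerivAt (fun s => s ^ 6 + ε / Real.sqrt (4 * s ^ 6 + 1))
      (6 * t ^ 5 + (0 * Real.sqrt (4 * t ^ 6 + 1)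
        - ε * (12 * t ^ 5 / Real.sqrt (4 * t ^ 6 + 1))) / Real.sqrt (4 * t ^ 6 + 1) ^ 2) t := by
  have h2 := ((hasDerivAt_const t ε).div (hasDerivAt_q t) (q_pos t).ne')
  simpa [pow_succ, Pi.add_def, Pi.div_def] using (hasDerivAt_pow 6 t).add h2

lemma isEnvelope_eps (ε : ℝ) (hε : ε ^ 2 = 1) :
    IsEnvelope Set.univ (fun t => vec2 (t ^ 3) (t ^ 6)) (fun _ => 1)
      (fun t => vec2 (t ^ 3 - ε * (2 * t ^ 3) / Real.sqrt (4 * t ^ 6 + 1))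
        (t ^ 6 + ε / Real.sqrt (4 * t ^ 6 + 1))) := by
  constructor
  · apply ContDiff.contDiffOn
    have hs : ContDiff ℝ (⊤ : ℕ∞) fun s : ℝ => Real.sqrt (4 * s ^ 6 + 1) :=
      ContDiff.sqrt (by fun_prop) (fun t => by positivity)
    have hx : ContDiff ℝ (⊤ : ℕ∞) fun t : ℝ => t ^ 3 - ε * (2 * t ^ 3) / Real.sqrt (4 * t ^ 6 + 1) := by
      apply ContDiff.sub (by fun_prop)
      exact ContDiff.div (by fun_prop) hs (fun t => (q_pos t).ne')
    have hy : ContDiff ℝ (⊤ : ℕ∞) fun t : ℝ => t ^ 6 + ε / Real.sqrt (4 * t ^ 6 + 1) := by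
      apply ContDiff.add (by fun_prop)
      exact ContDiff.div (by fun_prop) hs (fun t => (q_pos t).ne')
    have h : (fun t : ℝ => vec2 (t ^ 3 - ε * (2 * t ^ 3) / Real.sqrt (4 * t ^ 6 + 1))
        (t ^ 6 + ε / Real.sqrt (4 * t ^ 6 + 1)))
        = fun t => (t ^ 3 - ε * (2 * t ^ 3) / Real.sqrt (4 * t ^ 6 + 1)) • vec2 1 0
          + (t ^ 6 + ε / Real.sqrt (4 * t ^ 6 + 1)) • vec2 0 1 := by
      funext s; rw [vec2_smul]
    rw [h]
    exact (hx.smul contDiff_const).add (hy.smul contDiff_const)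
  · intro t _
    set q := Real.sqrt (4 * t ^ 6 + 1) with hqdef
    have hq : 0 < q := q_pos t
    have hq2 : q ^ 2 = 4 * t ^ 6 + 1 := q_sq t
    have hsub : vec2 (t ^ 3 - ε * (2 * t ^ 3) / q) (t ^ 6 + ε / q) - vec2 (t ^ 3) (t ^ 6)
        = vec2 (-(ε * (2 * t ^ 3)) / q) (ε / q) := by
      rw [vec2_sub]; congr 1 <;> ring
    constructor
    · rw [hsub, norm_eq_one]
      rw [vec2_apply0, vec2_apply1]
      field_simp
      nlinarith [hq2, hε]
    · have hd := (hasDerivAt_vec2 (hasDerivAt_X ε t) (hasDerivAt_Y ε t)).deriv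
      rw [hd, hsub, dotp_eq, vec2_apply0, vec2_apply1, vec2_apply0, vec2_apply1]
      rw [← hqdef]
      field_simp
      linear_combination (12*t^5*ε^2) * hq2

lemma classify (g : ℝ → Plane)
    (hg : IsEnvelope Set.univ (fun t => vec2 (t ^ 3) (t ^ 6)) (fun _ => 1) g) :
    (∀ t, g t = vec2 (t ^ 3 - 2 * t ^ 3 / Real.sqrt (4 * t ^ 6 + 1))
        (t ^ 6 + 1 / Real.sqrt (4 * t ^ 6 + 1))) ∨
    (∀ t, g t = vec2 (t ^ 3 + 2 * t ^ 3 / Real.sqrt (4 * t ^ 6 + 1))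
        (t ^ 6 - 1 / Real.sqrt (4 * t ^ 6 + 1))) := by
  obtain ⟨hsm, hcond⟩ := hg
  have hgd : ContDiff ℝ (⊤ : ℕ∞) g := contDiffOn_univ.mp hsm
  set γ : ℝ → Plane := fun t => vec2 (t ^ 3) (t ^ 6) with hγ
  set u : ℝ → Plane := fun t => g t - γ t with hu
  have hu_norm : ∀ t, ‖u t‖ = 1 := fun t => (hcond t trivial).1
  have hsq : ∀ t, u t 0 ^ 2 + u t 1 ^ 2 = 1 := by
    intro t
    have h := norm_sq_eq (u t)
    rw [hu_norm t] at h; linarith [h.symm]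
  -- γ is differentiable with the obvious derivative
  have hγ' : ∀ t, HasDerivAt γ (vec2 (3 * t ^ 2) (6 * t ^ 5)) t := by
    intro t
    exact hasDerivAt_vec2 (by simpa using hasDerivAt_pow 3 t) (by simpa using hasDerivAt_pow 6 t)
  -- tangency: γ' ⊥ u
  have key : ∀ t, 3 * t ^ 2 * u t 0 + 6 * t ^ 5 * u t 1 = 0 := by
    intro t
    have hg' : HasDerivAt g (deriv g t) t := (hgd.differentiable (by simp) t).hasDerivAt
    have hu' : HasDerivAt u (deriv g t - vec2 (3 * t ^ 2) (6 * t ^ 5)) t := hg'.sub (hγ' t)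
    have hD := hu'.inner ℝ hu'
    have hconst : (fun t => (inner ℝ (u t) (u t) : ℝ)) = fun _ => (1 : ℝ) := by
      funext r
      rw [real_inner_self_eq_norm_sq, hu_norm r]; norm_num
    rw [hconst] at hD
    have hzero := hD.unique (hasDerivAt_const t 1)
    have hdg : dotp (deriv g t) (u t) = 0 := (hcond t trivial).2
    rw [dotp_eq] at hdg
    rw [inner_eq, inner_eq] at hzero
    simp only [PiLp.sub_apply, vec2_apply0, vec2_apply1] at hzero
    linarith
  -- for t ≠ 0 : u t 0 = -2 t^3 * u t 1
  have hrel : ∀ t, t ≠ 0 → u t 0 = -(2 * t ^ 3) * u t 1 := by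
    intro t ht
    have h3 : (3 : ℝ) * t ^ 2 ≠ 0 := by positivity
    have : 3 * t ^ 2 * (u t 0 + 2 * t ^ 3 * u t 1) = 0 := by linear_combination key t
    rcases mul_eq_zero.mp this with h | h
    · exact absurd h h3
    · linarith
  -- the sign function
  set s : ℝ → ℝ := fun t => (u t 0 * (-(2 * t ^ 3)) + u t 1) / Real.sqrt (4 * t ^ 6 + 1)
    with hs
  have hu_cont : Continuous u := by
    have hγc : Continuous γ := by
      have h : γ = fun t => (t ^ 3) • vec2 1 0 + (t ^ 6) • vec2 0 1 := by
        funext r; rw [vec2_smul]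
      rw [h]; fun_prop
    exact (hgd.continuous).sub hγc
  have hs_cont : Continuous s := by
    apply Continuous.div
    · apply Continuous.add
      · exact ((EuclideanSpace.proj (0 : Fin 2)).continuous.comp hu_cont).mul (by fun_prop)
      · exact (EuclideanSpace.proj (1 : Fin 2)).continuous.comp hu_cont
    · fun_prop
    · exact fun t => (q_pos t).ne'
  have hs2 : ∀ t, s t ^ 2 = 1 := by
    have hne : ∀ t, t ≠ 0 → s t ^ 2 = 1 := by
      intro t ht
      have hq2 := q_sq t
      have hq := q_pos t
      have hr := hrel t ht
      have hh := hsq t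
      rw [hs]
      rw [div_pow, hq2]
      rw [div_eq_one_iff_eq (by positivity)]
      nlinarith [hr, hh]
    have heq : (fun t => s t ^ 2) = fun _ => (1 : ℝ) :=
      Continuous.ext_on (dense_compl_singleton (0:ℝ)) (by fun_prop) continuous_const
        (fun t ht => hne t ht)
    exact fun t => congrFun heq t
  have hval : ∀ t, s t = 1 ∨ s t = -1 := by
    intro t
    have h : (s t - 1) * (s t + 1) = 0 := by linear_combination hs2 t
    rcases mul_eq_zero.mp h with h | h
    · left; linarith
    · right; linarith
  have hcst : ∀ t, s t = s 0 := by
    intro t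
    by_contra hne
    have h0 : (0:ℝ) ∈ Set.uIcc (s 0) (s t) := by
      rcases hval 0 with h|h <;> rcases hval t with h'|h' <;>
        rw [h, h'] at hne ⊢ <;> first | (exact absurd rfl hne) | (rw [Set.mem_uIcc]; norm_num)
    obtain ⟨c, _, hc⟩ := intermediate_value_uIcc (hs_cont.continuousOn) h0
    have := hs2 c
    rw [hc] at this
    norm_num at this
  -- value of s at a point t ≠ 0 determines u
  have hcomp : ∀ t, u t 0 = s 0 * (-(2 * t ^ 3)) / Real.sqrt (4 * t ^ 6 + 1)
      ∧ u t 1 = s 0 / Real.sqrt (4 * t ^ 6 + 1) := by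
    intro t
    by_cases ht : t = 0
    · subst ht
      have hq1 : Real.sqrt (4 * (0:ℝ) ^ 6 + 1) = 1 := by norm_num
      have hs0 : s 0 = u 0 1 := by simp [hs, Real.sqrt_one]
      constructor
      · have h := hsq 0
        have h1 : u 0 1 ^ 2 = 1 := by rw [← hs0]; exact hs2 0
        have : u 0 0 ^ 2 = 0 := by linarith
        have h0 : u 0 0 = 0 := by
          have := sq_eq_zero_iff.mp this
          exact this
        rw [h0, hq1]; norm_num
      · rw [hq1, hs0]; norm_num
    · have hq2 := q_sq t
      have hq := q_pos t
      have hr := hrel t ht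
      have hnum : u t 0 * (-(2 * t ^ 3)) + u t 1 = s 0 * Real.sqrt (4 * t ^ 6 + 1) := by
        rw [← hcst t, hs]
        field_simp
      have hE : (4 * t ^ 6 + 1) * u t 1 = s 0 * Real.sqrt (4 * t ^ 6 + 1) := by
        linear_combination hnum + (2 * t ^ 3) * hr
      have hu1 : u t 1 = s 0 / Real.sqrt (4 * t ^ 6 + 1) := by
        rw [eq_div_iff hq.ne']
        apply mul_right_cancel₀ hq.ne'
        linear_combination hE + u t 1 * hq2
      constructor
      · rw [hr, hu1]; ring
      · exact hu1
  -- conclude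
  have hgval : ∀ t, g t = vec2 (t ^ 3 + s 0 * (-(2 * t ^ 3)) / Real.sqrt (4 * t ^ 6 + 1))
      (t ^ 6 + s 0 / Real.sqrt (4 * t ^ 6 + 1)) := by
    intro t
    have h0 := (hcomp t).1
    have h1 := (hcomp t).2
    have hge : g t = u t + γ t := by rw [hu]; simp
    apply plane_ext
    · rw [hge]
      simp only [PiLp.add_apply, hγ, vec2_apply0, h0]
      ring
    · rw [hge]
      simp only [PiLp.add_apply, hγ, vec2_apply1, h1]
      ring
  rcases hval 0 with h | h
  · left
    intro t
    rw [hgval t, h]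
    congr 1 <;> ring
  · right
    intro t
    rw [hgval t, h]
    congr 1 <;> ring

lemma hasDerivAt_F (p : Plane) (t : ℝ) :
    HasDerivAt (fun s => ‖p - vec2 (s ^ 3) (s ^ 6)‖ ^ 2 - 1)
      (2 * (p 0 - t ^ 3) ^ 1 * (-(3 * t ^ 2)) + 2 * (p 1 - t ^ 6) ^ 1 * (-(6 * t ^ 5))) t := by
  have h : (fun s => ‖p - vec2 (s ^ 3) (s ^ 6)‖ ^ 2 - 1)
      = fun s => (p 0 - s ^ 3) ^ 2 + (p 1 - s ^ 6) ^ 2 - 1 := by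
    funext s
    rw [norm_sq_eq]
    simp only [PiLp.sub_apply, vec2_apply0, vec2_apply1]
  rw [h]
  have h1 : HasDerivAt (fun s : ℝ => (p 0 - s ^ 3) ^ 2) (2 * (p 0 - t ^ 3) ^ 1 * (-(3 * t ^ 2))) t := by
    have := ((hasDerivAt_pow 3 t).const_sub (p 0)).pow 2
    simpa [Pi.pow_def] using this
  have h2 : HasDerivAt (fun s : ℝ => (p 1 - s ^ 6) ^ 2) (2 * (p 1 - t ^ 6) ^ 1 * (-(6 * t ^ 5))) t := by
    have := ((hasDerivAt_pow 6 t).const_sub (p 1)).pow 2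
    simpa [Pi.pow_def] using this
  exact (h1.add h2).sub_const 1

lemma in_disc (p : Plane) (t ε : ℝ) (hε : ε ^ 2 = 1)
    (h0 : p 0 = t ^ 3 + ε * (-(2 * t ^ 3)) / Real.sqrt (4 * t ^ 6 + 1))
    (h1 : p 1 = t ^ 6 + ε / Real.sqrt (4 * t ^ 6 + 1)) :
    ‖p - vec2 (t ^ 3) (t ^ 6)‖ ^ 2 - 1 = 0 ∧
      deriv (fun s => ‖p - vec2 (s ^ 3) (s ^ 6)‖ ^ 2 - 1) t = 0 := by
  have hq := q_pos t
  have hq2 := q_sq t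
  set q := Real.sqrt (4 * t ^ 6 + 1) with hqdef
  constructor
  · rw [norm_sq_eq]
    simp only [PiLp.sub_apply, vec2_apply0, vec2_apply1, h0, h1]
    field_simp
    linear_combination (4 * t ^ 6 + 1) * hε - hq2
  · rw [(hasDerivAt_F p t).deriv, h0, h1]
    field_simp
    ring

theorem example_discriminant_strictly_larger :
    IsEnvelope Set.univ (fun t => vec2 (t ^ 3) (t ^ 6)) (fun _ => 1)
      (fun t => vec2 (t ^ 3 - 2 * t ^ 3 / Real.sqrt (4 * t ^ 6 + 1))
        (t ^ 6 + 1 / Real.sqrt (4 * t ^ 6 + 1))) ∧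
    IsEnvelope Set.univ (fun t => vec2 (t ^ 3) (t ^ 6)) (fun _ => 1)
      (fun t => vec2 (t ^ 3 + 2 * t ^ 3 / Real.sqrt (4 * t ^ 6 + 1))
        (t ^ 6 - 1 / Real.sqrt (4 * t ^ 6 + 1))) ∧
    (∀ g : ℝ → Plane,
      IsEnvelope Set.univ (fun t => vec2 (t ^ 3) (t ^ 6)) (fun _ => 1) g →
      (∀ t, g t = vec2 (t ^ 3 - 2 * t ^ 3 / Real.sqrt (4 * t ^ 6 + 1))
        (t ^ 6 + 1 / Real.sqrt (4 * t ^ 6 + 1))) ∨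
      (∀ t, g t = vec2 (t ^ 3 + 2 * t ^ 3 / Real.sqrt (4 * t ^ 6 + 1))
        (t ^ 6 - 1 / Real.sqrt (4 * t ^ 6 + 1)))) ∧
    {p : Plane | ‖p‖ = 1} ⊆
      {p : Plane | ∃ t : ℝ, ‖p - vec2 (t ^ 3) (t ^ 6)‖ ^ 2 - 1 = 0 ∧
        deriv (fun s => ‖p - vec2 (s ^ 3) (s ^ 6)‖ ^ 2 - 1) t = 0} ∧
    {p : Plane | ∃ g : ℝ → Plane,
        IsEnvelope Set.univ (fun t => vec2 (t ^ 3) (t ^ 6)) (fun _ => 1) g ∧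
        p ∈ Set.range g} ⊂
      {p : Plane | ∃ t : ℝ, ‖p - vec2 (t ^ 3) (t ^ 6)‖ ^ 2 - 1 = 0 ∧
        deriv (fun s => ‖p - vec2 (s ^ 3) (s ^ 6)‖ ^ 2 - 1) t = 0} := by
  have hε1 : (1:ℝ) ^ 2 = 1 := by norm_num
  have hεm : (-1:ℝ) ^ 2 = 1 := by norm_num
  have em : IsEnvelope Set.univ (fun t => vec2 (t ^ 3) (t ^ 6)) (fun _ => 1)
      (fun t => vec2 (t ^ 3 - 2 * t ^ 3 / Real.sqrt (4 * t ^ 6 + 1))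
        (t ^ 6 + 1 / Real.sqrt (4 * t ^ 6 + 1))) := by
    have h := isEnvelope_eps 1 hε1
    have e : (fun t : ℝ => vec2 (t ^ 3 - 1 * (2 * t ^ 3) / Real.sqrt (4 * t ^ 6 + 1))
        (t ^ 6 + 1 / Real.sqrt (4 * t ^ 6 + 1)))
        = fun t => vec2 (t ^ 3 - 2 * t ^ 3 / Real.sqrt (4 * t ^ 6 + 1))
          (t ^ 6 + 1 / Real.sqrt (4 * t ^ 6 + 1)) := by
      funext t; congr 1 <;> ring
    rw [← e]; exact h
  have ep : IsEnvelope Set.univ (fun t => vec2 (t ^ 3) (t ^ 6)) (fun _ => 1)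
      (fun t => vec2 (t ^ 3 + 2 * t ^ 3 / Real.sqrt (4 * t ^ 6 + 1))
        (t ^ 6 - 1 / Real.sqrt (4 * t ^ 6 + 1))) := by
    have h := isEnvelope_eps (-1) hεm
    have e : (fun t : ℝ => vec2 (t ^ 3 - (-1) * (2 * t ^ 3) / Real.sqrt (4 * t ^ 6 + 1))
        (t ^ 6 + (-1) / Real.sqrt (4 * t ^ 6 + 1)))
        = fun t => vec2 (t ^ 3 + 2 * t ^ 3 / Real.sqrt (4 * t ^ 6 + 1))
          (t ^ 6 - 1 / Real.sqrt (4 * t ^ 6 + 1)) := by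
      funext t; congr 1 <;> ring
    rw [← e]; exact h
  have hcirc : {p : Plane | ‖p‖ = 1} ⊆
      {p : Plane | ∃ t : ℝ, ‖p - vec2 (t ^ 3) (t ^ 6)‖ ^ 2 - 1 = 0 ∧
        deriv (fun s => ‖p - vec2 (s ^ 3) (s ^ 6)‖ ^ 2 - 1) t = 0} := by
    intro p hp
    have hz : vec2 ((0:ℝ) ^ 3) ((0:ℝ) ^ 6) = 0 := by
      apply plane_ext <;> simp [vec2_apply0, vec2_apply1]
    refine ⟨0, ?_, ?_⟩
    · rw [hz, sub_zero]
      have : ‖p‖ = 1 := hp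
      rw [this]; norm_num
    · rw [(hasDerivAt_F p 0).deriv]
      norm_num
  have hsubset : {p : Plane | ∃ g : ℝ → Plane,
        IsEnvelope Set.univ (fun t => vec2 (t ^ 3) (t ^ 6)) (fun _ => 1) g ∧
        p ∈ Set.range g} ⊆
      {p : Plane | ∃ t : ℝ, ‖p - vec2 (t ^ 3) (t ^ 6)‖ ^ 2 - 1 = 0 ∧
        deriv (fun s => ‖p - vec2 (s ^ 3) (s ^ 6)‖ ^ 2 - 1) t = 0} := by
    rintro p ⟨g, hg, t, ht⟩
    rcases classify g hg with h | h
    · refine ⟨t, in_disc p t 1 hε1 ?_ ?_⟩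
      · rw [← ht, h t, vec2_apply0]; try ring
      · rw [← ht, h t, vec2_apply1]; try ring
    · refine ⟨t, in_disc p t (-1) hεm ?_ ?_⟩
      · rw [← ht, h t, vec2_apply0]; try ring
      · rw [← ht, h t, vec2_apply1]; try ring
  refine ⟨em, ep, classify, hcirc, ?_⟩
  rw [Set.ssubset_iff_of_subset hsubset]
  refine ⟨vec2 1 0, hcirc (norm_eq_one (by rw [vec2_apply0, vec2_apply1]; norm_num)), ?_⟩
  rintro ⟨g, hg, t, ht⟩
  have hq := q_pos t
  have hq2 := q_sq t
  rcases classify g hg with h | h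
  · have hc := (h t).symm.trans ht
    have c1 := congrArg (fun v : Plane => v 1) hc
    simp only [vec2_apply1] at c1
    have h6 : (0:ℝ) ≤ t ^ 6 := by positivity
    have hpos : 0 < 1 / Real.sqrt (4 * t ^ 6 + 1) := by positivity
    linarith
  · have hc := (h t).symm.trans ht
    have c0 := congrArg (fun v : Plane => v 0) hc
    have c1 := congrArg (fun v : Plane => v 1) hc
    simp only [vec2_apply0] at c0
    simp only [vec2_apply1] at c1
    set q := Real.sqrt (4 * t ^ 6 + 1) with hqdef
    have hc0 : t ^ 3 * q + 2 * t ^ 3 = q := by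
      have := c0
      field_simp at this
      linarith
    have hc1 : t ^ 6 * q = 1 := by
      field_simp at c1
      linarith
    have hu1 : t ^ 3 + 2 * t ^ 9 = 1 := by
      linear_combination t ^ 6 * hc0 + (1 - t ^ 3) * hc1
    have hu2 : 4 * t ^ 18 + t ^ 12 = 1 := by
      linear_combination (q * t ^ 6 + 1) * hc1 - t ^ 12 * hq2
    have h5 : t ^ 3 * (t ^ 3 - 3) = 0 := by
      linear_combination 2 * hu2 + (-4 * t ^ 9 + t ^ 3 - 2) * hu1
    rcases mul_eq_zero.mp h5 with h3 | h3
    · have h9 : t ^ 9 = 0 := by linear_combination t ^ 6 * h3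
      linarith
    · have h3' : t ^ 3 = 3 := by linarith
      have h9 : t ^ 9 = 27 := by linear_combination (t ^ 6 + 3 * t ^ 3 + 9) * h3'
      linarith
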